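/- arXiv:2407.00077 — 4 statements merged into one kernel-verified Lean document; each statement's English description precedes it below -/
import Mathlib

section
/- For α > 1 and any shift h ∈ ℝ with |h| ≤ ρ, the Rényi divergence of order α between a one-dimensional Laplace distribution with mean 0 and scale σ and one with mean h and scale σ is at most (1/(α-1)) · log( (α/(2α-1)) · exp((α-1)ρ/σ) + ((α-1)/(2α-1)) · exp(-αρ/σ) ). -/
open Real MeasureTheory Set

/-- Laplace density with mean `m` and scale `σ`. -/
noncomputable def lapDensity (σ m x : ℝ) : ℝ := (1 / (2 * σ)) * Real.exp (-|x - m| / σ)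

lemma aux_intOn_Ioi (b c : ℝ) (hb : 0 < b) :
    IntegrableOn (fun x : ℝ => Real.exp (-(b * x))) (Ioi c) := by
  simpa [neg_mul] using exp_neg_integrableOn_Ioi c hb

lemma aux_int_Ioi (b c : ℝ) (hb : 0 < b) :
    ∫ x in Ioi c, Real.exp (-(b * x)) = Real.exp (-(b * c)) / b := by
  have h := integral_comp_mul_left_Ioi (fun x => Real.exp (-x)) c hb
  simp only [smul_eq_mul] at h
  rw [h, integral_exp_neg_Ioi]
  ring

lemma aux_intOn_Iic (b c : ℝ) (hb : 0 < b) :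
    IntegrableOn (fun x : ℝ => Real.exp (b * x)) (Iic c) := by
  have h := (MeasurePreserving.integrableOn_comp_preimage
      (Measure.measurePreserving_neg (volume : Measure ℝ))
      (Homeomorph.neg ℝ).measurableEmbedding).2 (aux_intOn_Ioi b (-c) hb)
  have hs : (fun x : ℝ => -x) ⁻¹' Ioi (-c) = Iio c := by
    ext x; simp
  rw [hs] at h
  rw [integrableOn_Iic_iff_integrableOn_Iio]
  refine h.congr_fun (fun x _ => ?_) measurableSet_Iio
  simp [Function.comp, mul_neg, neg_neg]

lemma aux_int_Iic (b c : ℝ) (hb : 0 < b) :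
    ∫ x in Iic c, Real.exp (b * x) = Real.exp (b * c) / b := by
  have h := integral_comp_neg_Iic c (fun x : ℝ => Real.exp (-(b * x)))
  simp only [mul_neg, neg_neg] at h
  rw [h, aux_int_Ioi b (-c) hb]
  simp [mul_neg, neg_neg]

lemma lap_exact (α σ h : ℝ) (hα : 1 < α) (hσ : 0 < σ) (hh : 0 ≤ h) :
    (∫ x : ℝ, (1 / (2 * σ)) * Real.exp (((α - 1) * |x - h| - α * |x|) / σ))
      = α / (2 * α - 1) * Real.exp ((α - 1) * h / σ)
        + (α - 1) / (2 * α - 1) * Real.exp (-α * h / σ) := by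
  have hσ' : σ ≠ 0 := hσ.ne'
  have h2α : (0:ℝ) < 2 * α - 1 := by linarith
  set f : ℝ → ℝ := fun x => (1 / (2 * σ)) * Real.exp (((α - 1) * |x - h| - α * |x|) / σ) with hf
  set A : ℝ := (α - 1) * h / σ with hA
  set b : ℝ := (2 * α - 1) / σ with hb
  have hbpos : 0 < b := by positivity
  have hσinv : (0:ℝ) < σ⁻¹ := by positivity
  -- piecewise formulas
  have e1 : ∀ x ∈ Iic (0:ℝ), f x = Real.exp A / (2 * σ) * Real.exp (σ⁻¹ * x) := by
    intro x hx
    simp only [mem_Iic] at hx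
    have harg : ((α - 1) * |x - h| - α * |x|) / σ = A + σ⁻¹ * x := by
      rw [abs_of_nonpos hx, abs_of_nonpos (by linarith : x - h ≤ 0), hA]
      field_simp
      ring
    rw [hf]
    simp only
    rw [harg, Real.exp_add]
    ring
  have e2 : ∀ x ∈ Ioc (0:ℝ) h, f x = Real.exp A / (2 * σ) * Real.exp (-(b * x)) := by
    intro x hx
    obtain ⟨hx1, hx2⟩ := hx
    have harg : ((α - 1) * |x - h| - α * |x|) / σ = A + -(b * x) := by
      rw [abs_of_nonneg hx1.le, abs_of_nonpos (by linarith : x - h ≤ 0), hA, hb]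
      field_simp
      ring
    rw [hf]
    simp only
    rw [harg, Real.exp_add]
    ring
  have e3 : ∀ x ∈ Ioi h, f x = Real.exp (-A) / (2 * σ) * Real.exp (-(σ⁻¹ * x)) := by
    intro x hx
    simp only [mem_Ioi] at hx
    have hx0 : 0 ≤ x := le_trans hh hx.le
    have harg : ((α - 1) * |x - h| - α * |x|) / σ = -A + -(σ⁻¹ * x) := by
      rw [abs_of_nonneg hx0, abs_of_nonneg (by linarith : 0 ≤ x - h), hA]
      field_simp
      ring
    rw [hf]
    simp only
    rw [harg, Real.exp_add]
    ring
  -- integrability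
  have I1 : IntegrableOn f (Iic 0) := by
    have base : IntegrableOn (fun x : ℝ => Real.exp A / (2 * σ) * Real.exp (σ⁻¹ * x)) (Iic 0) :=
      (aux_intOn_Iic σ⁻¹ 0 hσinv).const_mul _
    exact IntegrableOn.congr_fun base (fun x hx => (e1 x hx).symm) measurableSet_Iic
  have hcont : Continuous f := by
    apply Continuous.mul continuous_const
    apply Real.continuous_exp.comp
    apply Continuous.div_const
    exact ((continuous_const.mul ((continuous_id.sub continuous_const).abs)).sub
      (continuous_const.mul continuous_id.abs))
  have I2 : IntegrableOn f (Ioc 0 h) := hcont.integrableOn_Ioc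
  have I3 : IntegrableOn f (Ioi h) := by
    have base : IntegrableOn (fun x : ℝ => Real.exp (-A) / (2 * σ) * Real.exp (-(σ⁻¹ * x))) (Ioi h) :=
      (aux_intOn_Ioi σ⁻¹ h hσinv).const_mul _
    exact IntegrableOn.congr_fun base (fun x hx => (e3 x hx).symm) measurableSet_Ioi
  have I23 : IntegrableOn f (Ioi 0) := by
    rw [← Ioc_union_Ioi_eq_Ioi hh]
    exact I2.union I3
  -- values of pieces
  have J1 : ∫ x in Iic (0:ℝ), f x = Real.exp A / 2 := by
    rw [setIntegral_congr_fun measurableSet_Iic e1, integral_const_mul,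
      aux_int_Iic σ⁻¹ 0 hσinv]
    field_simp
    simp
  have J3 : ∫ x in Ioi h, f x = Real.exp (-α * h / σ) / 2 := by
    rw [setIntegral_congr_fun measurableSet_Ioi e3, integral_const_mul,
      aux_int_Ioi σ⁻¹ h hσinv]
    have key : Real.exp (-A) * Real.exp (-(σ⁻¹ * h)) = Real.exp (-α * h / σ) := by
      rw [← Real.exp_add]
      congr 1
      rw [hA]
      field_simp
      ring
    have step : Real.exp (-A) / (2 * σ) * (Real.exp (-(σ⁻¹ * h)) / σ⁻¹)
        = Real.exp (-A) * Real.exp (-(σ⁻¹ * h)) / 2 := by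
      field_simp
    rw [step, key]
  have J2 : ∫ x in Ioc (0:ℝ) h, f x
      = (Real.exp A - Real.exp (-α * h / σ)) / (2 * (2 * α - 1)) := by
    rw [setIntegral_congr_fun measurableSet_Ioc e2, integral_const_mul]
    have hsum : (∫ x in Ioc (0:ℝ) h, Real.exp (-(b * x)))
        + ∫ x in Ioi h, Real.exp (-(b * x)) = ∫ x in Ioi (0:ℝ), Real.exp (-(b * x)) := by
      rw [← Ioc_union_Ioi_eq_Ioi hh,
        setIntegral_union (Ioc_disjoint_Ioi le_rfl) measurableSet_Ioi
          ((aux_intOn_Ioi b 0 hbpos).mono_set Ioc_subset_Ioi_self) (aux_intOn_Ioi b h hbpos)]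
    rw [aux_int_Ioi b 0 hbpos, aux_int_Ioi b h hbpos] at hsum
    have hIoc : ∫ x in Ioc (0:ℝ) h, Real.exp (-(b * x))
        = (1 - Real.exp (-(b * h))) / b := by
      have : Real.exp (-(b * 0)) = 1 := by simp
      rw [this] at hsum
      field_simp at hsum ⊢
      linarith
    rw [hIoc]
    have key : Real.exp A * Real.exp (-(b * h)) = Real.exp (-α * h / σ) := by
      rw [← Real.exp_add]
      congr 1
      rw [hA, hb]
      field_simp
      ring
    rw [← key, hb]
    have hu := Real.exp_pos A
    field_simp
  -- assemble
  have split2 : ∫ x in Ioi (0:ℝ), f x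
      = (∫ x in Ioc (0:ℝ) h, f x) + ∫ x in Ioi h, f x := by
    rw [← Ioc_union_Ioi_eq_Ioi hh,
      setIntegral_union (Ioc_disjoint_Ioi le_rfl) measurableSet_Ioi I2 I3]
  have split1 : (∫ x : ℝ, f x)
      = (∫ x in Iic (0:ℝ), f x) + ∫ x in Ioi (0:ℝ), f x :=
    (intervalIntegral.integral_Iic_add_Ioi I1 I23).symm
  rw [split1, split2, J1, J2, J3]
  field_simp
  ring

lemma fmono (a b c d : ℝ) (ha : 0 ≤ a) (hb : 0 ≤ b) (hc : 0 ≤ c) (hd : 0 ≤ d)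
    (habcd : a * c = b * d) {s t : ℝ} (hs : 0 ≤ s) (hst : s ≤ t) :
    a * Real.exp (c * s) + b * Real.exp (-(d * s))
      ≤ a * Real.exp (c * t) + b * Real.exp (-(d * t)) := by
  set F : ℝ → ℝ := fun x => a * Real.exp (c * x) + b * Real.exp (-(d * x)) with hF
  have hder : ∀ x : ℝ, HasDerivAt F (a * c * Real.exp (c * x) - b * d * Real.exp (-(d * x))) x := by
    intro x
    have h1 : HasDerivAt (fun x : ℝ => Real.exp (c * x)) (Real.exp (c * x) * (c * 1)) x :=
      ((hasDerivAt_id x).const_mul c).exp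
    have h2 : HasDerivAt (fun x : ℝ => Real.exp (-(d * x))) (Real.exp (-(d * x)) * (-(d * 1))) x :=
      ((hasDerivAt_id x).const_mul d).neg.exp
    have := (h1.const_mul a).add (h2.const_mul b)
    exact this.congr_deriv (by ring)
  have hmono : MonotoneOn F (Ici (0:ℝ)) := by
    apply monotoneOn_of_deriv_nonneg (convex_Ici 0)
    · refine Continuous.continuousOn ?_
      apply Continuous.add
      · exact continuous_const.mul (Real.continuous_exp.comp (continuous_const.mul continuous_id))
      · exact continuous_const.mul
          (Real.continuous_exp.comp (continuous_const.mul continuous_id).neg)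
    · intro x _
      exact (hder x).differentiableAt.differentiableWithinAt
    · intro x hx
      rw [interior_Ici] at hx
      rw [(hder x).deriv]
      have hx0 : (0:ℝ) ≤ x := (mem_Ioi.1 hx).le
      have hle : Real.exp (-(d * x)) ≤ Real.exp (c * x) :=
        Real.exp_le_exp.2 (by nlinarith)
      nlinarith [mul_nonneg ha hc, Real.exp_pos (c * x), Real.exp_pos (-(d * x))]
  exact hmono (mem_Ici.2 hs) (mem_Ici.2 (le_trans hs hst)) hst

/-- Rényi divergence bound between `Laplace(0,σ)` and `Laplace(h,σ)` for `|h| ≤ ρ`. -/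
theorem stmt0 (α σ ρ h : ℝ) (hα : 1 < α) (hσ : 0 < σ) (hh : |h| ≤ ρ) :
    (1 / (α - 1)) * Real.log
        (∫ x : ℝ, (lapDensity σ 0 x / lapDensity σ h x) ^ α * lapDensity σ h x) ≤
      (1 / (α - 1)) * Real.log
        ((α / (2 * α - 1)) * Real.exp ((α - 1) * ρ / σ) +
          ((α - 1) / (2 * α - 1)) * Real.exp (-α * ρ / σ)) := by
  have hσ' : σ ≠ 0 := hσ.ne'
  have h2α : (0:ℝ) < 2 * α - 1 := by linarith
  have hfun : ∀ x : ℝ, (lapDensity σ 0 x / lapDensity σ h x) ^ α * lapDensity σ h x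
      = (1 / (2 * σ)) * Real.exp (((α - 1) * |x - h| - α * |x|) / σ) := by
    intro x
    have h2σ : (0:ℝ) < 1 / (2 * σ) := by positivity
    unfold lapDensity
    rw [sub_zero, mul_div_mul_left _ _ (ne_of_gt h2σ), ← Real.exp_sub, ← Real.exp_mul,
      mul_left_comm, ← Real.exp_add]
    congr 1
    field_simp
    ring
  have key : (∫ x : ℝ, (lapDensity σ 0 x / lapDensity σ h x) ^ α * lapDensity σ h x)
      = α / (2 * α - 1) * Real.exp ((α - 1) * |h| / σ)
        + (α - 1) / (2 * α - 1) * Real.exp (-α * |h| / σ) := by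
    simp_rw [hfun]
    rcases abs_cases h with ⟨h1, h2⟩ | ⟨h1, h2⟩
    · rw [h1]
      exact lap_exact α σ h hα hσ h2
    · rw [h1]
      rw [← lap_exact α σ (-h) hα hσ (by linarith)]
      rw [← integral_neg_eq_self
        (fun x => (1 / (2 * σ)) * Real.exp (((α - 1) * |x - -h| - α * |x|) / σ)) volume]
      congr 1
      funext x
      rw [show -x - -h = -(x - h) by ring, abs_neg, abs_neg]
  rw [key]
  have hexp1 : ∀ u : ℝ, (α - 1) * u / σ = ((α - 1) / σ) * u := fun u => by ring
  have hexp2 : ∀ u : ℝ, -α * u / σ = -((α / σ) * u) := fun u => by ring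
  have hmono : α / (2 * α - 1) * Real.exp ((α - 1) * |h| / σ)
        + (α - 1) / (2 * α - 1) * Real.exp (-α * |h| / σ)
      ≤ α / (2 * α - 1) * Real.exp ((α - 1) * ρ / σ)
        + (α - 1) / (2 * α - 1) * Real.exp (-α * ρ / σ) := by
    rw [hexp1 |h|, hexp1 ρ, hexp2 |h|, hexp2 ρ]
    apply fmono
    · exact le_of_lt (div_pos (by linarith) h2α)
    · exact le_of_lt (div_pos (by linarith) h2α)
    · exact le_of_lt (div_pos (by linarith) hσ)
    · exact le_of_lt (div_pos (by linarith) hσ)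
    · field_simp
    · exact abs_nonneg h
    · exact hh
  have hpos : 0 < α / (2 * α - 1) * Real.exp ((α - 1) * |h| / σ)
      + (α - 1) / (2 * α - 1) * Real.exp (-α * |h| / σ) :=
    add_pos (mul_pos (div_pos (by linarith) h2α) (Real.exp_pos _))
      (mul_pos (div_pos (by linarith) h2α) (Real.exp_pos _))
  have hlog := Real.log_le_log hpos hmono
  have hcoef : (0:ℝ) ≤ 1 / (α - 1) := le_of_lt (div_pos one_pos (by linarith))
  exact mul_le_mul_of_nonneg_left hlog hcoef
end

section
/- The function f(h) = (1/(α-1)) · log( λ₁ exp(λ₂ h) + λ₃ exp(-λ₄ h) ) with λ₁ = α/(2α-1), λ₂ = (α-1)/σ, λ₃ = (α-1)/(2α-1), λ₄ = α/σ, for α > 1 and σ > 0, is convex on ℝ. -/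
open Real

/-- Two-term Hölder inequality. -/
lemma holder2 {u1 u2 v1 v2 a b : ℝ} (hu1 : 0 < u1) (hu2 : 0 < u2) (hv1 : 0 < v1)
    (hv2 : 0 < v2) (ha : 0 ≤ a) (hb : 0 ≤ b) (hab : a + b = 1) :
    u1 ^ a * v1 ^ b + u2 ^ a * v2 ^ b ≤ (u1 + u2) ^ a * (v1 + v2) ^ b := by
  have hU : 0 < u1 + u2 := by linarith
  have hV : 0 < v1 + v2 := by linarith
  have hUV : 0 < (u1 + u2) ^ a * (v1 + v2) ^ b := by positivity
  have e1 : u1 ^ a * v1 ^ b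
      = ((u1 / (u1 + u2)) ^ a * (v1 / (v1 + v2)) ^ b) * ((u1 + u2) ^ a * (v1 + v2) ^ b) := by
    rw [Real.div_rpow hu1.le hU.le, Real.div_rpow hv1.le hV.le]
    field_simp
  have e2 : u2 ^ a * v2 ^ b
      = ((u2 / (u1 + u2)) ^ a * (v2 / (v1 + v2)) ^ b) * ((u1 + u2) ^ a * (v1 + v2) ^ b) := by
    rw [Real.div_rpow hu2.le hU.le, Real.div_rpow hv2.le hV.le]
    field_simp
  have g1 : (u1 / (u1 + u2)) ^ a * (v1 / (v1 + v2)) ^ b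
      ≤ a * (u1 / (u1 + u2)) + b * (v1 / (v1 + v2)) :=
    Real.geom_mean_le_arith_mean2_weighted ha hb (by positivity) (by positivity) hab
  have g2 : (u2 / (u1 + u2)) ^ a * (v2 / (v1 + v2)) ^ b
      ≤ a * (u2 / (u1 + u2)) + b * (v2 / (v1 + v2)) :=
    Real.geom_mean_le_arith_mean2_weighted ha hb (by positivity) (by positivity) hab
  have hsum : (a * (u1 / (u1 + u2)) + b * (v1 / (v1 + v2)))
      + (a * (u2 / (u1 + u2)) + b * (v2 / (v1 + v2))) = 1 := by
    field_simp
    linear_combination (u1 * v1 + u1 * v2 + v1 * u2 + v2 * u2) * hab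
  calc u1 ^ a * v1 ^ b + u2 ^ a * v2 ^ b
      = (((u1 / (u1 + u2)) ^ a * (v1 / (v1 + v2)) ^ b)
        + ((u2 / (u1 + u2)) ^ a * (v2 / (v1 + v2)) ^ b)) * ((u1 + u2) ^ a * (v1 + v2) ^ b) := by
        rw [e1, e2]; ring
    _ ≤ 1 * ((u1 + u2) ^ a * (v1 + v2) ^ b) := by
        apply mul_le_mul_of_nonneg_right _ hUV.le
        rw [← hsum]
        exact add_le_add g1 g2
    _ = (u1 + u2) ^ a * (v1 + v2) ^ b := one_mul _

/-- Convexity of `h ↦ (1/(α-1)) log(λ₁ e^{λ₂ h} + λ₃ e^{-λ₄ h})` with the Laplace-Rényi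
coefficients. -/
theorem stmt2 (α σ : ℝ) (hα : 1 < α) (hσ : 0 < σ) :
    ConvexOn ℝ Set.univ (fun h : ℝ =>
      (1 / (α - 1)) * Real.log
        ((α / (2 * α - 1)) * Real.exp (((α - 1) / σ) * h) +
          ((α - 1) / (2 * α - 1)) * Real.exp (-(α / σ) * h))) := by
  have h2 : (0:ℝ) < 2 * α - 1 := by linarith
  have hα1 : (0:ℝ) < α - 1 := by linarith
  have hl1 : (0:ℝ) < α / (2 * α - 1) := by positivity
  have hl3 : (0:ℝ) < (α - 1) / (2 * α - 1) := by positivity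
  have hc : (0:ℝ) ≤ 1 / (α - 1) := by positivity
  refine ⟨convex_univ, fun x _ y _ a b ha hb hab => ?_⟩
  simp only [smul_eq_mul]
  set gx := (α / (2 * α - 1)) * Real.exp (((α - 1) / σ) * x) +
      ((α - 1) / (2 * α - 1)) * Real.exp (-(α / σ) * x) with hgx_def
  set gy := (α / (2 * α - 1)) * Real.exp (((α - 1) / σ) * y) +
      ((α - 1) / (2 * α - 1)) * Real.exp (-(α / σ) * y) with hgy_def
  have hgx : 0 < gx := by positivity
  have hgy : 0 < gy := by positivity
  have hz : 0 < (α / (2 * α - 1)) * Real.exp (((α - 1) / σ) * (a * x + b * y)) +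
      ((α - 1) / (2 * α - 1)) * Real.exp (-(α / σ) * (a * x + b * y)) := by positivity
  have key : (α / (2 * α - 1)) * Real.exp (((α - 1) / σ) * (a * x + b * y)) +
      ((α - 1) / (2 * α - 1)) * Real.exp (-(α / σ) * (a * x + b * y)) ≤ gx ^ a * gy ^ b := by
    have e1 : (α / (2 * α - 1)) * Real.exp (((α - 1) / σ) * (a * x + b * y))
        = ((α / (2 * α - 1)) * Real.exp (((α - 1) / σ) * x)) ^ a *
          ((α / (2 * α - 1)) * Real.exp (((α - 1) / σ) * y)) ^ b := by
      rw [Real.mul_rpow hl1.le (Real.exp_pos _).le, Real.mul_rpow hl1.le (Real.exp_pos _).le,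
        ← Real.exp_mul, ← Real.exp_mul]
      have : (α / (2 * α - 1)) ^ a * Real.exp ((α - 1) / σ * x * a) *
          ((α / (2 * α - 1)) ^ b * Real.exp ((α - 1) / σ * y * b))
          = (α / (2 * α - 1)) ^ (a + b) *
            Real.exp ((α - 1) / σ * x * a + (α - 1) / σ * y * b) := by
        rw [Real.rpow_add hl1, Real.exp_add]; ring
      rw [this, hab, Real.rpow_one]
      ring_nf
    have e2 : ((α - 1) / (2 * α - 1)) * Real.exp (-(α / σ) * (a * x + b * y))
        = (((α - 1) / (2 * α - 1)) * Real.exp (-(α / σ) * x)) ^ a *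
          (((α - 1) / (2 * α - 1)) * Real.exp (-(α / σ) * y)) ^ b := by
      rw [Real.mul_rpow hl3.le (Real.exp_pos _).le, Real.mul_rpow hl3.le (Real.exp_pos _).le,
        ← Real.exp_mul, ← Real.exp_mul]
      have : ((α - 1) / (2 * α - 1)) ^ a * Real.exp (-(α / σ) * x * a) *
          (((α - 1) / (2 * α - 1)) ^ b * Real.exp (-(α / σ) * y * b))
          = ((α - 1) / (2 * α - 1)) ^ (a + b) *
            Real.exp (-(α / σ) * x * a + -(α / σ) * y * b) := by
        rw [Real.rpow_add hl3, Real.exp_add]; ring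
      rw [this, hab, Real.rpow_one]
      ring_nf
    rw [e1, e2]
    exact holder2 (by positivity) (by positivity) (by positivity) (by positivity) ha hb hab
  calc (1 / (α - 1)) * Real.log ((α / (2 * α - 1)) * Real.exp (((α - 1) / σ) * (a * x + b * y)) +
        ((α - 1) / (2 * α - 1)) * Real.exp (-(α / σ) * (a * x + b * y)))
      ≤ (1 / (α - 1)) * Real.log (gx ^ a * gy ^ b) :=
        mul_le_mul_of_nonneg_left (Real.log_le_log hz key) hc
    _ = (1 / (α - 1)) * (a * Real.log gx + b * Real.log gy) := by
        rw [Real.log_mul (by positivity) (by positivity), Real.log_rpow hgx, Real.log_rpow hgy]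
    _ = a * ((1 / (α - 1)) * Real.log gx) + b * ((1 / (α - 1)) * Real.log gy) := by ring
end

section
/- Let α > 1, σ > 0, and λ₁ = α/(2α-1), λ₂ = (α-1)/σ, λ₃ = (α-1)/(2α-1), λ₄ = α/σ. For fixed c > 0, the function g(h₁) = f(h₁) + f(c - h₁) on [0, c], where f(h) = (1/(α-1)) log(λ₁ e^{λ₂ h} + λ₃ e^{-λ₄ h}), attains its maximum at the endpoints h₁ = 0 or h₁ = c, i.e., g(h₁) ≤ g(0) = g(c) for all h₁ ∈ [0, c]. -/
open Real

private lemma key_exp (u v M : ℝ) (hu : u ≤ M) (hv : v ≤ M) :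
    Real.exp u + Real.exp v ≤ Real.exp M + Real.exp (u + v - M) := by
  have h1 : Real.exp u ≤ Real.exp M := Real.exp_le_exp.2 hu
  have h2 : Real.exp v ≤ Real.exp M := Real.exp_le_exp.2 hv
  have h3 : Real.exp (u + v - M) * Real.exp M = Real.exp u * Real.exp v := by
    rw [← Real.exp_add, ← Real.exp_add]; ring_nf
  have hM : 0 < Real.exp M := Real.exp_pos M
  nlinarith [mul_nonneg (sub_nonneg.2 h1) (sub_nonneg.2 h2)]

/-- On `[0, c]` the two-shift objective `g(h₁) = f(h₁) + f(c - h₁)` is maximized at the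
endpoints, where `f` is the shifted-Laplace Rényi divergence. -/
theorem stmt3 (α σ c : ℝ) (hα : 1 < α) (hσ : 0 < σ) (hc : 0 < c)
    (f : ℝ → ℝ)
    (hf : ∀ h, f h = (1 / (α - 1)) * Real.log
      ((α / (2 * α - 1)) * Real.exp (((α - 1) / σ) * h) +
        ((α - 1) / (2 * α - 1)) * Real.exp (-(α / σ) * h))) :
    (∀ h₁ ∈ Set.Icc (0 : ℝ) c, f h₁ + f (c - h₁) ≤ f 0 + f c) ∧
      f 0 + f c = f c + f 0 := by
  have hα2 : (0:ℝ) < 2 * α - 1 := by linarith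
  set l1 : ℝ := α / (2 * α - 1) with hl1def
  set l3 : ℝ := (α - 1) / (2 * α - 1) with hl3def
  set l2 : ℝ := (α - 1) / σ with hl2def
  set l4 : ℝ := α / σ with hl4def
  have hl1 : 0 < l1 := div_pos (by linarith) hα2
  have hl3 : 0 < l3 := div_pos (by linarith) hα2
  have hl2 : 0 < l2 := div_pos (by linarith) hσ
  have hl4 : 0 < l4 := div_pos (by linarith) hσ
  have hsum : l1 + l3 = 1 := by
    rw [hl1def, hl3def, ← add_div, div_eq_one_iff_eq hα2.ne']; ring
  set F : ℝ → ℝ := fun h => l1 * Real.exp (l2 * h) + l3 * Real.exp (-l4 * h) with hFdef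
  have hFpos : ∀ h, 0 < F h := fun h => by
    have := Real.exp_pos (l2 * h); have := Real.exp_pos (-l4 * h); positivity
  have hfF : ∀ h, f h = (1 / (α - 1)) * Real.log (F h) := fun h => hf h
  have hF0 : F 0 = 1 := by
    simp [hFdef, hsum]
  have hf0 : f 0 = 0 := by rw [hfF, hF0, Real.log_one, mul_zero]
  constructor
  · rintro h₁ ⟨h0, h1c⟩
    -- key product inequality
    have hu : l2 * h₁ - l4 * (c - h₁) ≤ l2 * c := by nlinarith
    have hv : l2 * (c - h₁) - l4 * h₁ ≤ l2 * c := by nlinarith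
    have key := key_exp (l2 * h₁ - l4 * (c - h₁)) (l2 * (c - h₁) - l4 * h₁) (l2 * c) hu hv
    rw [show l2 * h₁ - l4 * (c - h₁) + (l2 * (c - h₁) - l4 * h₁) - l2 * c = -l4 * c by ring] at key
    have e1 : Real.exp (l2 * h₁) * Real.exp (l2 * (c - h₁)) = Real.exp (l2 * c) := by
      rw [← Real.exp_add]; congr 1; ring
    have e2 : Real.exp (-l4 * h₁) * Real.exp (-l4 * (c - h₁)) = Real.exp (-l4 * c) := by
      rw [← Real.exp_add]; congr 1; ring
    have eu : Real.exp (l2 * h₁) * Real.exp (-l4 * (c - h₁)) =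
        Real.exp (l2 * h₁ - l4 * (c - h₁)) := by
      rw [← Real.exp_add]; congr 1; ring
    have ev : Real.exp (-l4 * h₁) * Real.exp (l2 * (c - h₁)) =
        Real.exp (l2 * (c - h₁) - l4 * h₁) := by
      rw [← Real.exp_add]; congr 1; ring
    have hprod : F h₁ * F (c - h₁) ≤ F c := by
      have expand : F h₁ * F (c - h₁) =
          l1 * l1 * Real.exp (l2 * c) + l3 * l3 * Real.exp (-l4 * c) +
          l1 * l3 * (Real.exp (l2 * h₁ - l4 * (c - h₁)) +
            Real.exp (l2 * (c - h₁) - l4 * h₁)) := by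
        simp only [hFdef]
        linear_combination (l1 * l1) * e1 + (l3 * l3) * e2 + (l1 * l3) * eu + (l1 * l3) * ev
      rw [expand]
      have h13 : 0 < l1 * l3 := mul_pos hl1 hl3
      simp only [hFdef]
      have hkey' : l1 * l3 * (Real.exp (l2 * h₁ - l4 * (c - h₁)) +
          Real.exp (l2 * (c - h₁) - l4 * h₁)) ≤
          l1 * l3 * (Real.exp (l2 * c) + Real.exp (-l4 * c)) :=
        mul_le_mul_of_nonneg_left key h13.le
      have hid : l1 * l1 * Real.exp (l2 * c) + l3 * l3 * Real.exp (-l4 * c) +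
          l1 * l3 * (Real.exp (l2 * c) + Real.exp (-l4 * c)) =
          l1 * Real.exp (l2 * c) + l3 * Real.exp (-l4 * c) := by
        linear_combination (l1 * Real.exp (l2 * c) + l3 * Real.exp (-l4 * c)) * hsum
      linarith
    -- pass to logs
    have hlog : Real.log (F h₁) + Real.log (F (c - h₁)) ≤ Real.log (F c) := by
      rw [← Real.log_mul (ne_of_gt (hFpos h₁)) (ne_of_gt (hFpos (c - h₁)))]
      exact Real.log_le_log (mul_pos (hFpos h₁) (hFpos (c - h₁))) hprod
    rw [hfF h₁, hfF (c - h₁), hfF 0, hfF c, hF0, Real.log_one, mul_zero, zero_add,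
      ← mul_add]
    have hpos : (0:ℝ) < 1 / (α - 1) := div_pos one_pos (by linarith)
    exact mul_le_mul_of_nonneg_left hlog (le_of_lt hpos)
  · ring
end

section
/- Let G be a graph in which nodes u and v have degrees d_u, d_v ≥ 2 and share no common neighbors, and let G' be G with edge (u,v) removed. For the associated random-walk matrices P = A D^{-1} and P' = A' D'^{-1}, and any vector x ∈ ℝ^n with x_w = 0 for all w ∉ {u, v} and 0 ≤ x_u ≤ η d_u, 0 ≤ x_v ≤ η d_v: ‖(P − P') x‖₁ ≤ 2(x_u/d_u + x_v/d_v) ≤ 4η. -/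
open Finset Matrix

/-- Distortion of the random-walk matrix under removal of an edge `(u,v)` between
degree-≥2 nodes with no common neighbors, applied to a clipped vector supported on
`{u, v}`. -/
theorem stmt18 (n : ℕ) (A : Matrix (Fin n) (Fin n) ℝ) (u v : Fin n) (huv : u ≠ v)
    (hsym : A.IsSymm) (h01 : ∀ i j, A i j = 0 ∨ A i j = 1)
    (hdiag : ∀ i, A i i = 0) (hedge : A u v = 1)
    (A' : Matrix (Fin n) (Fin n) ℝ)
    (hA' : ∀ i j, A' i j = if (i = u ∧ j = v) ∨ (i = v ∧ j = u) then 0 else A i j)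
    (d d' : Fin n → ℝ) (hd : ∀ j, d j = ∑ i, A i j) (hd' : ∀ j, d' j = ∑ i, A' i j)
    (hdu : 2 ≤ d u) (hdv : 2 ≤ d v)
    (hcommon : ∀ w, w ≠ u → w ≠ v → A w u = 0 ∨ A w v = 0)
    (P P' : Matrix (Fin n) (Fin n) ℝ)
    (hP : ∀ i j, P i j = A i j / d j) (hP' : ∀ i j, P' i j = A' i j / d' j)
    (η : ℝ) (hη : 0 < η)
    (x : Fin n → ℝ) (hsupp : ∀ w, w ≠ u → w ≠ v → x w = 0)
    (hxu : 0 ≤ x u) (hxu' : x u ≤ η * d u) (hxv : 0 ≤ x v) (hxv' : x v ≤ η * d v) :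
    (∑ i, |(P - P').mulVec x i|) ≤ 2 * (x u / d u + x v / d v) ∧
      2 * (x u / d u + x v / d v) ≤ 4 * η := by
  have hApos : ∀ i j, 0 ≤ A i j := fun i j => by rcases h01 i j with h | h <;> rw [h] <;> norm_num
  have hAvu : A v u = 1 := by rw [hsym.apply, hedge]
  have hdu0 : (0:ℝ) < d u := by linarith
  have hdv0 : (0:ℝ) < d v := by linarith
  have hdu1 : (0:ℝ) < d u - 1 := by linarith
  have hdv1 : (0:ℝ) < d v - 1 := by linarith
  -- A' in columns u and v
  have hA'u : ∀ i, A' i u = if i = v then 0 else A i u := by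
    intro i; rw [hA']
    by_cases h : i = v
    · simp [h]
    · simp [h, huv]
  have hA'v : ∀ i, A' i v = if i = u then 0 else A i v := by
    intro i; rw [hA']
    by_cases h : i = u
    · simp [h]
    · simp [h, huv.symm]
  -- degrees after removal
  have hd'u : d' u = d u - 1 := by
    rw [hd', hd]
    have h1 : ∀ i, A' i u = A i u - (if i = v then A v u else 0) := by
      intro i; rw [hA'u]
      by_cases h : i = v
      · subst h; simp
      · simp [h]
    rw [Finset.sum_congr rfl fun i _ => h1 i, Finset.sum_sub_distrib, Finset.sum_ite_eq']
    simp [hAvu]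
  have hd'v : d' v = d v - 1 := by
    rw [hd', hd]
    have h1 : ∀ i, A' i v = A i v - (if i = u then A u v else 0) := by
      intro i; rw [hA'v]
      by_cases h : i = u
      · subst h; simp
      · simp [h]
    rw [Finset.sum_congr rfl fun i _ => h1 i, Finset.sum_sub_distrib, Finset.sum_ite_eq']
    simp [hedge]
  -- the vector
  set g : Fin n → ℝ := fun i => (P i u - P' i u) * x u + (P i v - P' i v) * x v with hg
  have hmv : ∀ i, (P - P').mulVec x i = g i := by
    intro i
    have h1 : ∀ j, (P - P') i j * x j =
        (if j = u then (P i u - P' i u) * x u else 0) +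
        (if j = v then (P i v - P' i v) * x v else 0) := by
      intro j
      by_cases h : j = u
      · subst h; simp [huv, Matrix.sub_apply]
      · by_cases h2 : j = v
        · subst h2; simp [huv.symm, Matrix.sub_apply, h]
        · simp [h, h2, hsupp j h h2]
    rw [Matrix.mulVec, dotProduct, Finset.sum_congr rfl fun j _ => h1 j,
      Finset.sum_add_distrib, Finset.sum_ite_eq', Finset.sum_ite_eq']
    simp [hg]
  -- values at u and v
  have hgu : |g u| = x v / d v := by
    have : g u = x v / d v := by
      simp only [hg, hP, hP', hA'u, hA'v, hd'u, hd'v]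
      simp [huv, huv.symm, hdiag u, hedge]
      ring
    rw [this, abs_of_nonneg (div_nonneg hxv hdv0.le)]
  have hgv : |g v| = x u / d u := by
    have : g v = x u / d u := by
      simp only [hg, hP, hP', hA'u, hA'v, hd'u, hd'v]
      simp [huv, huv.symm, hdiag v, hAvu]
      ring
    rw [this, abs_of_nonneg (div_nonneg hxu hdu0.le)]
  -- values elsewhere
  have hgS : ∀ i, i ≠ u → i ≠ v → |g i| =
      A i u * (x u * (1 / (d u - 1) - 1 / d u)) + A i v * (x v * (1 / (d v - 1) - 1 / d v)) := by
    intro i hiu hiv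
    have hgi : g i = -(A i u * (x u * (1 / (d u - 1) - 1 / d u)) +
        A i v * (x v * (1 / (d v - 1) - 1 / d v))) := by
      simp only [hg, hP, hP', hA'u, hA'v, hd'u, hd'v, if_neg hiu, if_neg hiv]
      field_simp
      ring
    have hcu : 0 ≤ 1 / (d u - 1) - 1 / d u := by
      rw [sub_nonneg]; apply div_le_div_of_nonneg_left one_pos.le hdu1 (by linarith)
    have hcv : 0 ≤ 1 / (d v - 1) - 1 / d v := by
      rw [sub_nonneg]; apply div_le_div_of_nonneg_left one_pos.le hdv1 (by linarith)
    rw [hgi, abs_neg]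
    exact abs_of_nonneg (add_nonneg
      (mul_nonneg (hApos i u) (mul_nonneg hxu hcu))
      (mul_nonneg (hApos i v) (mul_nonneg hxv hcv)))
  -- column sums over the rest
  have hvmem : v ∈ (univ : Finset (Fin n)).erase u := Finset.mem_erase.mpr ⟨huv.symm, Finset.mem_univ v⟩
  have humem : u ∈ (univ : Finset (Fin n)).erase v := Finset.mem_erase.mpr ⟨huv, Finset.mem_univ u⟩
  have hSu : ∑ i ∈ ((univ : Finset (Fin n)).erase u).erase v, A i u = d u - 1 := by
    have h2 := Finset.add_sum_erase ((univ : Finset (Fin n)).erase u) (fun i => A i u) hvmem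
    have h3 := Finset.add_sum_erase (univ : Finset (Fin n)) (fun i => A i u) (Finset.mem_univ u)
    rw [hd u]
    linarith [h2, h3, hdiag u, hAvu]
  have hSv : ∑ i ∈ ((univ : Finset (Fin n)).erase u).erase v, A i v = d v - 1 := by
    have hcomm : ((univ : Finset (Fin n)).erase u).erase v = ((univ : Finset (Fin n)).erase v).erase u := by
      rw [Finset.erase_right_comm]
    have h2 := Finset.add_sum_erase ((univ : Finset (Fin n)).erase v) (fun i => A i v) humem
    have h3 := Finset.add_sum_erase (univ : Finset (Fin n)) (fun i => A i v) (Finset.mem_univ v)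
    rw [hcomm, hd v]
    linarith [h2, h3, hdiag v, hedge]
  -- total
  have htotal : (∑ i, |(P - P').mulVec x i|) = 2 * (x u / d u + x v / d v) := by
    have hrw : ∀ i, |(P - P').mulVec x i| = |g i| := fun i => by rw [hmv]
    rw [Finset.sum_congr rfl fun i _ => hrw i,
      ← Finset.add_sum_erase (univ : Finset (Fin n)) (fun i => |g i|) (Finset.mem_univ u),
      ← Finset.add_sum_erase _ (fun i => |g i|) hvmem, hgu, hgv]
    have hsum : ∑ i ∈ ((univ : Finset (Fin n)).erase u).erase v, |g i| =
        (∑ i ∈ ((univ : Finset (Fin n)).erase u).erase v, A i u) * (x u * (1 / (d u - 1) - 1 / d u)) +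
        (∑ i ∈ ((univ : Finset (Fin n)).erase u).erase v, A i v) * (x v * (1 / (d v - 1) - 1 / d v)) := by
      rw [Finset.sum_mul, Finset.sum_mul, ← Finset.sum_add_distrib]
      refine Finset.sum_congr rfl fun i hi => ?_
      rw [Finset.mem_erase, Finset.mem_erase] at hi
      exact hgS i hi.2.1 hi.1
    rw [hsum, hSu, hSv]
    field_simp
    ring
  refine ⟨le_of_eq htotal, ?_⟩
  have h1 : x u / d u ≤ η := by rw [div_le_iff₀ hdu0]; linarith
  have h2 : x v / d v ≤ η := by rw [div_le_iff₀ hdv0]; linarith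
  linarith
end
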